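/- arXiv:2205.04489 — 3 statements merged into one kernel-verified Lean document; each statement's English description precedes it below -/
import Mathlib

section
/- There is an absolute constant C₀ > 0 such that for all real λ ≥ 9, all ε ∈ (0,1], every natural number ℓ with λ⁻¹ ≤ 2^{−ℓ} ≤ 1/4, and all μ, ν ≥ 0 satisfying |λ − √(μ² + ν²)| ≤ ε and λ·2^{−ℓ} < ν ≤ λ·2^{−ℓ+1}, one has |√(max(λ² − μ², 0)) − ν| ≤ C₀·2^{ℓ}·ε. -/
/-- In the dyadic piece `λ·2^{-ℓ} < ν ≤ λ·2^{-ℓ+1}` of the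
`ε`-annulus around the circle of radius `λ`, one has
`|√(max(λ² − μ², 0)) − ν| ≤ C₀·2^ℓ·ε`. -/
theorem stmt_2 :
    ∃ C₀ : ℝ, 0 < C₀ ∧
      ∀ (lam ε : ℝ) (ℓ : ℕ) (μ ν : ℝ), 9 ≤ lam → 0 < ε → ε ≤ 1 →
        lam⁻¹ ≤ ((2 : ℝ) ^ ℓ)⁻¹ → ((2 : ℝ) ^ ℓ)⁻¹ ≤ 1 / 4 →
        0 ≤ μ → 0 ≤ ν →
        |lam - Real.sqrt (μ ^ 2 + ν ^ 2)| ≤ ε →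
        lam * ((2 : ℝ) ^ ℓ)⁻¹ < ν → ν ≤ lam * ((2 : ℝ) ^ ℓ)⁻¹ * 2 →
          |Real.sqrt (max (lam ^ 2 - μ ^ 2) 0) - ν| ≤ C₀ * 2 ^ ℓ * ε := by
  refine ⟨3, by norm_num, ?_⟩
  intro lam ε ℓ μ ν hlam hε hε1 hinv hinv4 hμ hν hann hlo hhi
  have ht0 : (0:ℝ) < ((2:ℝ)^ℓ)⁻¹ := by positivity
  have hlam0 : (0:ℝ) < lam := by linarith
  have hν0 : 0 < ν := lt_trans (by positivity) hlo
  set r := Real.sqrt (μ^2 + ν^2) with hr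
  have hr0 : 0 ≤ r := Real.sqrt_nonneg _
  have hr2 : r^2 = μ^2 + ν^2 := Real.sq_sqrt (by positivity)
  obtain ⟨hal, har⟩ := abs_le.mp hann
  set w := Real.sqrt (max (lam^2 - μ^2) 0) with hw
  have hw0 : 0 ≤ w := Real.sqrt_nonneg _
  have hw2 : w^2 = max (lam^2 - μ^2) 0 := Real.sq_sqrt (le_max_right _ _)
  have hkey : |w^2 - ν^2| ≤ 3 * lam * ε := by
    rcases le_or_gt (μ^2) (lam^2) with h | h
    · have hwe : w^2 = lam^2 - μ^2 := by rw [hw2, max_eq_left (by linarith)]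
      have heq : w^2 - ν^2 = (lam - r) * (lam + r) := by
        rw [hwe]; linear_combination hr2
      rw [heq, abs_mul]
      have h3 : |lam + r| ≤ 3 * lam := by
        rw [abs_of_nonneg (by linarith)]; linarith
      calc |lam - r| * |lam + r| ≤ ε * (3 * lam) :=
            mul_le_mul hann h3 (abs_nonneg _) hε.le
        _ = 3 * lam * ε := by ring
    · have hwe : w^2 = 0 := by rw [hw2, max_eq_right (by linarith)]
      rw [hwe]
      have hν2 : ν^2 ≤ r^2 - lam^2 := by nlinarith [hr2]
      have habs : |(0:ℝ) - ν^2| = ν^2 := by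
        rw [abs_of_nonpos (by nlinarith)]; ring
      rw [habs]
      nlinarith [hr2]
  have hmul : |w - ν| * ν ≤ 3 * lam * ε := by
    have h1 : |w - ν| * (w + ν) = |w^2 - ν^2| := by
      rw [← abs_of_nonneg (by linarith : (0:ℝ) ≤ w + ν), ← abs_mul]
      ring_nf
    nlinarith [abs_nonneg (w - ν)]
  have h2 : (3:ℝ) * 2^ℓ * ε * ν ≥ 3 * lam * ε := by
    have : lam ≤ 2^ℓ * ν := by
      have h2ℓ : (0:ℝ) < (2:ℝ)^ℓ := by positivity
      calc lam = 2^ℓ * (lam * ((2:ℝ)^ℓ)⁻¹) := by field_simp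
        _ ≤ 2^ℓ * ν := by nlinarith
    have h3 := mul_le_mul_of_nonneg_left this (by positivity : (0:ℝ) ≤ 3 * ε)
    linarith [h3]
  have hfin : |w - ν| * ν ≤ 3 * 2^ℓ * ε * ν :=
    hmul.trans (by linarith : 3 * lam * ε ≤ 3 * 2^ℓ * ε * ν)
  exact le_of_mul_le_mul_right hfin hν0
end

section
/- Let (X, μ) and (Y, ν) be σ-finite measure spaces, let q ∈ [2,∞) be real, and let K be a positive integer. Let f₁, …, f_K ∈ L²(X) ∩ L^q(X) and suppose A ≥ 0 is such that for every vector c = (c₁,…,c_K) of complex numbers, ‖∑_{k=1}^K c_k f_k‖_{L^q(X)} ≤ A·(∑_{k=1}^K |c_k|²)^{1/2}. Then for all g₁, …, g_K ∈ L^q(Y), the function F(x,y) = ∑_{k=1}^K f_k(x)·g_k(y) satisfies ‖F‖_{L^q(X×Y, μ⊗ν)} ≤ A·(∑_{k=1}^K ‖g_k‖_{L^q(Y)}²)^{1/2}. -/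
open MeasureTheory
open scoped ENNReal

/-!
Fubini turns the `L^q(μ ⊗ ν)` norm of `F` into the `L^q(ν)` norm of
`y ↦ ‖F(·, y)‖_{L^q(μ)}`. For fixed `y` the hypothesis with `c = (g_k(y))_k` bounds that slice
norm by `A (∑ |g_k(y)|²)^{1/2}`. Since `q/2 ≥ 1`, Minkowski's inequality in `L^{q/2}(ν)` applied
to the `|g_k|²` gives `‖(∑ |g_k|²)^{1/2}‖_{L^q} ≤ (∑ ‖g_k‖_{L^q}²)^{1/2}`.
-/

theorem ENNReal.ofReal_sqrt_sum_toReal_sq {ι : Type*} (s : Finset ι) {a : ι → ℝ≥0∞}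
    (ha : ∀ i ∈ s, a i ≠ ∞) :
    ENNReal.ofReal √(∑ i ∈ s, (a i).toReal ^ 2) = (∑ i ∈ s, a i ^ 2) ^ (1 / 2 : ℝ) := by
  rw [Real.sqrt_eq_rpow, ← ENNReal.ofReal_rpow_of_nonneg (by positivity) (by norm_num),
    ENNReal.ofReal_sum_of_nonneg fun i _ => by positivity]
  congr 1
  refine Finset.sum_congr rfl fun i hi => ?_
  rw [ENNReal.ofReal_pow ENNReal.toReal_nonneg, ENNReal.ofReal_toReal (ha i hi)]

theorem eLpNorm_sqrt_sum_enorm_sq_le {α E ι : Type*} [MeasurableSpace α] {μ : Measure α}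
    [NormedAddCommGroup E] (s : Finset ι) {g : ι → α → E}
    (hg : ∀ i ∈ s, AEStronglyMeasurable (g i) μ) {p : ℝ≥0∞} (hp : 2 ≤ p) :
    eLpNorm (fun y => (∑ i ∈ s, ‖g i y‖ₑ ^ 2) ^ (1 / 2 : ℝ)) p μ ≤
      (∑ i ∈ s, eLpNorm (g i) p μ ^ 2) ^ (1 / 2 : ℝ) := by
  set r := p * ENNReal.ofReal (1 / 2) with hr
  have hr_one : 1 ≤ r := by
    rw [hr, one_div, ENNReal.ofReal_inv_of_pos two_pos, ENNReal.ofReal_ofNat, ← div_eq_mul_inv,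
      ENNReal.le_div_iff_mul_le (by simp) (by simp), one_mul]
    exact hp
  have hsq : ∀ i, eLpNorm (‖g i ·‖ₑ ^ (2 : ℝ)) r μ = eLpNorm (g i) p μ ^ 2 := fun i => by
    rw [eLpNorm_enorm_rpow _ two_pos, hr, mul_assoc, ← ENNReal.ofReal_mul (by norm_num)]
    norm_num
  calc eLpNorm (fun y => (∑ i ∈ s, ‖g i y‖ₑ ^ 2) ^ (1 / 2 : ℝ)) p μ
      = eLpNorm (∑ i ∈ s, (‖g i ·‖ₑ ^ (2 : ℝ))) r μ ^ (1 / 2 : ℝ) := by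
        rw [hr, ← eLpNorm_enorm_rpow _ (by norm_num)]
        simp [Finset.sum_apply]
    _ ≤ (∑ i ∈ s, eLpNorm (‖g i ·‖ₑ ^ (2 : ℝ)) r μ) ^ (1 / 2 : ℝ) := by
        gcongr
        exact eLpNorm_sum_le
          (fun i hi => ((hg i hi).enorm.pow_const _).aestronglyMeasurable) hr_one
    _ = (∑ i ∈ s, eLpNorm (g i) p μ ^ 2) ^ (1 / 2 : ℝ) := by simp only [hsq]

theorem eLpNorm_prod_eq_eLpNorm_eLpNorm {X Y E : Type*} [MeasurableSpace X] [MeasurableSpace Y]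
    [NormedAddCommGroup E] {μ : Measure X} {ν : Measure Y} [SFinite μ] [SFinite ν]
    {F : X × Y → E} (hF : AEStronglyMeasurable F (μ.prod ν)) {p : ℝ≥0∞}
    (hp0 : p ≠ 0) (hp : p ≠ ∞) :
    eLpNorm F p (μ.prod ν) = eLpNorm (fun y => eLpNorm (fun x => F (x, y)) p μ) p ν := by
  have hp_pos : 0 < p.toReal := ENNReal.toReal_pos hp0 hp
  simp only [eLpNorm_eq_lintegral_rpow_enorm_toReal hp0 hp, enorm_eq_self]
  rw [lintegral_prod_symm _ (hF.enorm.pow_const _)]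
  congr 2 with y
  rw [← ENNReal.rpow_mul, one_div_mul_cancel hp_pos.ne', ENNReal.rpow_one]

theorem stmt_6_general {X Y : Type*} [MeasurableSpace X] [MeasurableSpace Y]
    (μ : Measure X) (ν : Measure Y) [SigmaFinite μ] [SigmaFinite ν]
    (q : ℝ) (hq : 2 ≤ q) (K : ℕ)
    (f : Fin K → X → ℂ)
    (hfq : ∀ k, MemLp (f k) (ENNReal.ofReal q) μ)
    (A : ℝ) (hA : 0 ≤ A)
    (hbd : ∀ c : Fin K → ℂ,
      eLpNorm (fun x => ∑ k, c k * f k x) (ENNReal.ofReal q) μ ≤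
        ENNReal.ofReal (A * Real.sqrt (∑ k, ‖c k‖ ^ 2)))
    (g : Fin K → Y → ℂ) (hg : ∀ k, MemLp (g k) (ENNReal.ofReal q) ν) :
    eLpNorm (fun p : X × Y => ∑ k, f k p.1 * g k p.2) (ENNReal.ofReal q)
        (μ.prod ν) ≤
      ENNReal.ofReal (A * Real.sqrt
        (∑ k, ((eLpNorm (g k) (ENNReal.ofReal q) ν).toReal) ^ 2)) := by
  have hq0 : ENNReal.ofReal q ≠ 0 := (ENNReal.ofReal_pos.2 (by linarith)).ne'
  have hF : AEStronglyMeasurable (fun p : X × Y => ∑ k, f k p.1 * g k p.2) (μ.prod ν) :=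
    Finset.aestronglyMeasurable_fun_sum _ fun k _ => (hfq k).1.comp_fst.mul (hg k).1.comp_snd
  have hslice : ∀ y, ‖eLpNorm (fun x => ∑ k, f k x * g k y) (ENNReal.ofReal q) μ‖ₑ ≤
      ENNReal.ofReal A * ‖(∑ k, ‖g k y‖ₑ ^ 2) ^ (1 / 2 : ℝ)‖ₑ := fun y => by
    simpa only [mul_comm (g _ y), ← toReal_enorm, ENNReal.ofReal_mul hA, enorm_eq_self,
      ENNReal.ofReal_sqrt_sum_toReal_sq _ fun k _ => enorm_ne_top] using hbd (g · y)
  calc eLpNorm (fun p : X × Y => ∑ k, f k p.1 * g k p.2) (ENNReal.ofReal q) (μ.prod ν)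
      = eLpNorm (fun y => eLpNorm (fun x => ∑ k, f k x * g k y) (ENNReal.ofReal q) μ)
          (ENNReal.ofReal q) ν :=
        eLpNorm_prod_eq_eLpNorm_eLpNorm hF hq0 ENNReal.ofReal_ne_top
    _ ≤ ENNReal.ofReal A * eLpNorm (fun y => (∑ k, ‖g k y‖ₑ ^ 2) ^ (1 / 2 : ℝ))
          (ENNReal.ofReal q) ν :=
        eLpNorm_le_mul_eLpNorm_of_ae_le_mul' (.of_forall hslice) _
    _ ≤ ENNReal.ofReal A * (∑ k, eLpNorm (g k) (ENNReal.ofReal q) ν ^ 2) ^ (1 / 2 : ℝ) := by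
        gcongr
        exact eLpNorm_sqrt_sum_enorm_sq_le _ (fun k _ => (hg k).1) (by simpa using hq)
    _ = _ := by
        rw [ENNReal.ofReal_mul hA, ENNReal.ofReal_sqrt_sum_toReal_sq _ fun k _ => (hg k).2.ne]

/-- Minkowski-inequality step: if the `f_k` satisfy an
`ℓ² → L^q(X)` bound with constant `A`, then for any `g_k ∈ L^q(Y)` the
function `F(x,y) = ∑ f_k(x)·g_k(y)` satisfies
`‖F‖_{L^q(X×Y)} ≤ A·(∑ ‖g_k‖_{L^q(Y)}²)^{1/2}`. -/
theorem stmt_6 {X Y : Type*} [MeasurableSpace X] [MeasurableSpace Y]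
    (μ : Measure X) (ν : Measure Y) [SigmaFinite μ] [SigmaFinite ν]
    (q : ℝ) (hq : 2 ≤ q) (K : ℕ) (hK : 0 < K)
    (f : Fin K → X → ℂ)
    (hf2 : ∀ k, MemLp (f k) 2 μ)
    (hfq : ∀ k, MemLp (f k) (ENNReal.ofReal q) μ)
    (A : ℝ) (hA : 0 ≤ A)
    (hbd : ∀ c : Fin K → ℂ,
      eLpNorm (fun x => ∑ k, c k * f k x) (ENNReal.ofReal q) μ ≤
        ENNReal.ofReal (A * Real.sqrt (∑ k, ‖c k‖ ^ 2)))
    (g : Fin K → Y → ℂ) (hg : ∀ k, MemLp (g k) (ENNReal.ofReal q) ν) :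
    eLpNorm (fun p : X × Y => ∑ k, f k p.1 * g k p.2) (ENNReal.ofReal q)
        (μ.prod ν) ≤
      ENNReal.ofReal (A * Real.sqrt
        (∑ k, ((eLpNorm (g k) (ENNReal.ofReal q) ν).toReal) ^ 2)) :=
  stmt_6_general μ ν q hq K f hfq A hA hbd g hg
end

section
/- Let d_X ≥ 1 and d_Y ≥ 2 be integers, let A ≥ 1, and let ε : [1,∞) → (0,1] be such that t ↦ t·ε(t) is non-decreasing on [1,∞). Let μ : ℕ → [0,∞) be a sequence such that #{ i : μ_i ≤ λ } ≤ A·λ^{d_X} for all λ ≥ 1, and let R : [0,∞) → ℝ satisfy |R(τ)| ≤ A·ε(τ)·τ^{d_Y−1} for τ ≥ 1 and |R(τ)| ≤ A for 0 ≤ τ ≤ 1. Then there is a constant C, depending only on A, d_X, d_Y and ε(1), such that for all λ ≥ 1, ∑_{i : μ_i ≤ λ} |R(√(λ² − μ_i²))| ≤ C·ε(λ)·λ^{d_X + d_Y − 1}. -/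
/-- If `#{i : μᵢ ≤ λ} ≤ A·λ^{d_X}` and the remainder `R`
satisfies `|R(τ)| ≤ A·ε(τ)·τ^{d_Y−1}` for `τ ≥ 1` and `|R(τ)| ≤ A` for
`0 ≤ τ ≤ 1`, with `t·ε(t)` non-decreasing, then
`∑_{i : μᵢ ≤ λ} |R(√(λ² − μᵢ²))| ≤ C·ε(λ)·λ^{d_X+d_Y−1}`. -/
theorem stmt_13 (dX dY : ℕ) (hdX : 1 ≤ dX) (hdY : 2 ≤ dY)
    (A : ℝ) (hA : 1 ≤ A)
    (ε : ℝ → ℝ) (hεpos : ∀ t : ℝ, 1 ≤ t → 0 < ε t)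
    (hεle : ∀ t : ℝ, 1 ≤ t → ε t ≤ 1)
    (hmono : ∀ s t : ℝ, 1 ≤ s → s ≤ t → s * ε s ≤ t * ε t)
    (μ : ℕ → ℝ) (hμ : ∀ i, 0 ≤ μ i)
    (hfin : ∀ lam : ℝ, 1 ≤ lam → {i : ℕ | μ i ≤ lam}.Finite)
    (hcount : ∀ lam : ℝ, 1 ≤ lam →
      ({i : ℕ | μ i ≤ lam}.ncard : ℝ) ≤ A * lam ^ dX)
    (R : ℝ → ℝ)
    (hR1 : ∀ τ : ℝ, 1 ≤ τ → |R τ| ≤ A * ε τ * τ ^ (dY - 1))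
    (hR0 : ∀ τ : ℝ, 0 ≤ τ → τ ≤ 1 → |R τ| ≤ A) :
    ∃ C : ℝ, ∀ lam : ℝ, 1 ≤ lam →
      ∑' i : {i : ℕ | μ i ≤ lam},
          |R (Real.sqrt (lam ^ 2 - μ (i : ℕ) ^ 2))| ≤
        C * ε lam * lam ^ (dX + dY - 1) := by
  have hε1 : 0 < ε 1 := hεpos 1 le_rfl
  refine ⟨A ^ 2 / ε 1, ?_⟩
  intro lam hlam
  have hlam0 : (0:ℝ) < lam := lt_of_lt_of_le one_pos hlam
  haveI : Fintype {i : ℕ | μ i ≤ lam} := (hfin lam hlam).fintype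
  rw [tsum_fintype]
  set B : ℝ := A / ε 1 * (ε lam * lam ^ (dY - 1)) with hB
  have hεlam : 0 < ε lam := hεpos lam hlam
  have key : ∀ i : {i : ℕ | μ i ≤ lam},
      |R (Real.sqrt (lam ^ 2 - μ (i : ℕ) ^ 2))| ≤ B := by
    rintro ⟨i, hi⟩
    simp only [Set.mem_setOf_eq] at hi
    set τ := Real.sqrt (lam ^ 2 - μ i ^ 2) with hτ
    have hτ0 : 0 ≤ τ := Real.sqrt_nonneg _
    have hsub : lam ^ 2 - μ i ^ 2 ≤ lam ^ 2 := by nlinarith [hμ i]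
    have hτle : τ ≤ lam := by
      calc τ ≤ Real.sqrt (lam ^ 2) := Real.sqrt_le_sqrt hsub
        _ = lam := by rw [Real.sqrt_sq hlam0.le]
    have hAε : A ≤ A / ε 1 := by
      rw [le_div_iff₀ hε1]; nlinarith [hεle 1 le_rfl, hε1]
    have hcore : A * (ε lam * lam ^ (dY - 1)) ≤ B := by
      rw [hB]
      exact mul_le_mul_of_nonneg_right hAε (by positivity)
    rcases le_or_gt 1 τ with hτ1 | hτ1
    · have h1 := hR1 τ hτ1
      have hexp : dY - 1 = (dY - 2) + 1 := by omega
      have hεττ : ε τ * τ ≤ ε lam * lam := by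
        have := hmono τ lam hτ1 hτle
        linarith [this]
      have hpow : τ ^ (dY - 2) ≤ lam ^ (dY - 2) := pow_le_pow_left₀ hτ0 hτle _
      have h2 : A * ε τ * τ ^ (dY - 1) ≤ A * (ε lam * lam ^ (dY - 1)) := by
        rw [hexp, pow_succ, pow_succ]
        have hA0 : (0:ℝ) ≤ A := by linarith
        have hετ0 : 0 ≤ ε τ := (hεpos τ hτ1).le
        calc A * ε τ * (τ ^ (dY - 2) * τ) = A * (τ ^ (dY - 2) * (ε τ * τ)) := by ring
          _ ≤ A * (lam ^ (dY - 2) * (ε lam * lam)) := by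
              apply mul_le_mul_of_nonneg_left _ hA0
              apply mul_le_mul hpow hεττ (by positivity) (by positivity)
          _ = A * (ε lam * (lam ^ (dY - 2) * lam)) := by ring
      linarith
    · have h1 := hR0 τ hτ0 hτ1.le
      have hle1 : ε 1 ≤ ε lam * lam ^ (dY - 1) := by
        have h2 : 1 * ε 1 ≤ lam * ε lam := hmono 1 lam le_rfl hlam
        have h3 : lam ≤ lam ^ (dY - 1) := by
          calc lam = lam ^ 1 := (pow_one lam).symm
            _ ≤ lam ^ (dY - 1) := pow_le_pow_right₀ hlam (by omega)
        nlinarith [hεlam]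
      have : A ≤ B := by
        rw [hB, ← mul_assoc]
        calc A = A / ε 1 * ε 1 := by field_simp
          _ ≤ A / ε 1 * (ε lam * lam ^ (dY - 1)) := by
              apply mul_le_mul_of_nonneg_left hle1
              positivity
          _ = A / ε 1 * ε lam * lam ^ (dY - 1) := by ring
      linarith
  have hsum : ∑ i : {i : ℕ | μ i ≤ lam}, |R (Real.sqrt (lam ^ 2 - μ (i : ℕ) ^ 2))| ≤
      (Fintype.card {i : ℕ | μ i ≤ lam} : ℝ) * B := by
    have := Finset.sum_le_card_nsmul Finset.univ
      (fun i : {i : ℕ | μ i ≤ lam} => |R (Real.sqrt (lam ^ 2 - μ (i : ℕ) ^ 2))|) B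
      (fun i _ => key i)
    simpa [nsmul_eq_mul, Finset.card_univ] using this
  have hcard : (Fintype.card {i : ℕ | μ i ≤ lam} : ℝ) ≤ A * lam ^ dX := by
    have : {i : ℕ | μ i ≤ lam}.ncard = Fintype.card {i : ℕ | μ i ≤ lam} := by
      rw [Set.ncard_eq_toFinset_card']
      simp [Set.toFinset_card]
    have h := hcount lam hlam
    rw [this] at h
    exact_mod_cast h
  have hB0 : 0 ≤ B := by
    rw [hB]; positivity
  have hfinal : (Fintype.card {i : ℕ | μ i ≤ lam} : ℝ) * B ≤
      A ^ 2 / ε 1 * ε lam * lam ^ (dX + dY - 1) := by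
    have h1 : (Fintype.card {i : ℕ | μ i ≤ lam} : ℝ) * B ≤ A * lam ^ dX * B :=
      mul_le_mul_of_nonneg_right hcard hB0
    have hexp : dX + dY - 1 = dX + (dY - 1) := by omega
    have h2 : A * lam ^ dX * B = A ^ 2 / ε 1 * ε lam * lam ^ (dX + dY - 1) := by
      rw [hB, hexp, pow_add]
      field_simp
    linarith
  linarith
end
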